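/- arXiv:2512.09273 — 2 statements merged into one kernel-verified Lean document; each statement's English description precedes it below -/
import Mathlib

section
/- For positive integers g, h, m, the g·h·m × g·h·m matrix V = σ_e²·(I_g⊗I_h⊗I_m) + σ_α²·(I_g⊗J_h⊗J_m) + σ_β²·(J_g⊗I_h⊗J_m) + σ_γ²·(I_g⊗I_h⊗J_m), with σ_e² > 0 and σ_α², σ_β², σ_γ² ≥ 0, has inverse V⁻¹ = (1/λ₀)[I_g⊗I_h⊗(I_m − J̄_m)] + (1/λ₇)[(I_g − J̄_g)⊗(I_h − J̄_h)⊗J̄_m] + (1/λ₃)[(I_g − J̄_g)⊗J̄_h⊗J̄_m] + (1/λ₅)[J̄_g⊗(I_h − J̄_h)⊗J̄_m] + (1/λ₁)[J̄_g⊗J̄_h⊗J̄_m], where λ₀ = σ_e², λ₇ = σ_e² + m σ_γ², λ₃ = σ_e² + m σ_γ² + h m σ_α², λ₅ = σ_e² + m σ_γ² + g m σ_β², λ₁ = σ_e² + m σ_γ² + h m σ_α² + g m σ_β². -/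
open Matrix Kronecker

/-- The a×a all-ones matrix. -/
def Jmat (a : ℕ) : Matrix (Fin a) (Fin a) ℝ := Matrix.of fun _ _ => 1

/-- The averaging matrix J̄ₐ = (1/a)·Jₐ. -/
noncomputable def Jbar (a : ℕ) : Matrix (Fin a) (Fin a) ℝ := ((a : ℝ)⁻¹) • Jmat a

/-!
Writing `I = J̄ + (I - J̄)` and `J = a • J̄` in each of the three Kronecker factors, `V` becomes a
linear combination of the eight Kronecker products of `J̄` and `I - J̄`. These form a complete
family of orthogonal idempotents, and `W` is the combination of the same eight
idempotents with the reciprocal coefficients (the four strata with `I - J̄` in the last factor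
carry the eigenvalue `σe2` and are merged into one projection there). Both products are
therefore the sum of the eight idempotents, which is `1`.
-/

theorem OrthogonalIdempotents.sum_smul_mul_sum_smul {K R ι : Type*} [CommSemiring K] [Semiring R]
    [Algebra K R] [Fintype ι] {e : ι → R} (he : OrthogonalIdempotents e) (c d : ι → K) :
    (∑ i, c i • e i) * (∑ i, d i • e i) = ∑ i, (c i * d i) • e i := by
  classical
  simp_rw [Finset.sum_mul, Finset.mul_sum, smul_mul_smul_comm, he.mul_eq, smul_ite, smul_zero,
    Finset.sum_ite_eq, Finset.mem_univ, if_true]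

theorem CompleteOrthogonalIdempotents.sum_smul_mul_sum_smul_eq_one {K R ι : Type*} [CommSemiring K]
    [Semiring R] [Algebra K R] [Fintype ι] {e : ι → R} (he : CompleteOrthogonalIdempotents e)
    {c d : ι → K} (hcd : ∀ i, c i * d i = 1) :
    (∑ i, c i • e i) * (∑ i, d i • e i) = 1 := by
  simp only [he.sum_smul_mul_sum_smul, hcd, one_smul, he.complete]

theorem Matrix.sum_kronecker_sum {α ι κ l m n p : Type*} [CommSemiring α] [Fintype ι] [Fintype κ]
    (A : ι → Matrix l m α) (B : κ → Matrix n p α) :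
    ∑ x : ι × κ, A x.1 ⊗ₖ B x.2 = (∑ i, A i) ⊗ₖ (∑ j, B j) := by
  ext ⟨i, k⟩ ⟨j, l⟩
  simp only [kronecker_apply, sum_apply, Finset.sum_mul_sum, Fintype.sum_prod_type]

theorem CompleteOrthogonalIdempotents.kronecker {α ι κ m n : Type*} [CommSemiring α]
    [Fintype ι] [Fintype κ] [Fintype m] [Fintype n] [DecidableEq m] [DecidableEq n]
    {e : ι → Matrix m m α} {f : κ → Matrix n n α}
    (he : CompleteOrthogonalIdempotents e) (hf : CompleteOrthogonalIdempotents f) :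
    CompleteOrthogonalIdempotents fun x : ι × κ => e x.1 ⊗ₖ f x.2 where
  idem x := by
    rw [IsIdempotentElem, ← mul_kronecker_mul, (he.idem x.1).eq, (hf.idem x.2).eq]
  ortho := by
    rintro ⟨i, j⟩ ⟨i', j'⟩ hne
    simp only [← mul_kronecker_mul]
    by_cases hi : i = i'
    · subst hi
      rw [hf.ortho fun hj => hne (by rw [hj]), kronecker_zero]
    · rw [he.ortho hi, zero_kronecker]
  complete := by rw [sum_kronecker_sum, he.complete, hf.complete, one_kronecker_one]

theorem Jmat_eq_smul_Jbar (a : ℕ) : Jmat a = (a : ℝ) • Jbar a := by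
  ext i j
  have ha : (a : ℝ) ≠ 0 := Nat.cast_ne_zero.2 i.pos.ne'
  simp [Jbar, Jmat, ha]

theorem isIdempotentElem_Jbar (a : ℕ) : IsIdempotentElem (Jbar a) := by
  ext i j
  have ha : (a : ℝ) ≠ 0 := Nat.cast_ne_zero.2 i.pos.ne'
  simp only [Jbar, Jmat, smul_of, Matrix.mul_apply, of_apply, Pi.smul_apply, smul_eq_mul, mul_one,
    Finset.sum_const, Finset.card_univ, Fintype.card_fin, nsmul_eq_mul]
  field_simp

noncomputable def averagingProj (a : ℕ) : Fin 2 → Matrix (Fin a) (Fin a) ℝ :=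
  ![Jbar a, 1 - Jbar a]

theorem completeOrthogonalIdempotents_averagingProj (a : ℕ) :
    CompleteOrthogonalIdempotents (averagingProj a) :=
  .of_isIdempotentElem (isIdempotentElem_Jbar a)

theorem averagingProj_zero (a : ℕ) : averagingProj a 0 = Jbar a := rfl

theorem averagingProj_one (a : ℕ) : averagingProj a 1 = 1 - Jbar a := rfl

theorem sum_averagingProj (a : ℕ) : averagingProj a 0 + averagingProj a 1 = 1 := by
  simpa using (completeOrthogonalIdempotents_averagingProj a).complete

section Strata

variable (g h m : ℕ) (σe2 σα2 σβ2 σγ2 : ℝ)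

noncomputable def strataProj (s : Fin 2 × Fin 2 × Fin 2) :
    Matrix (Fin g × Fin h × Fin m) (Fin g × Fin h × Fin m) ℝ :=
  averagingProj g s.1 ⊗ₖ (averagingProj h s.2.1 ⊗ₖ averagingProj m s.2.2)

theorem completeOrthogonalIdempotents_strataProj :
    CompleteOrthogonalIdempotents (strataProj g h m) :=
  (completeOrthogonalIdempotents_averagingProj g).kronecker
    ((completeOrthogonalIdempotents_averagingProj h).kronecker
      (completeOrthogonalIdempotents_averagingProj m))

/-- A term `c • (… J …)` of `V` acts on a stratum as `c` times the sizes of its `J`-factors if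
the stratum has `J̄` (index `0`) in each of those factors, and as `0` otherwise. -/
def strataEigenvalue (s : Fin 2 × Fin 2 × Fin 2) : ℝ :=
  σe2 + (if s.2.2 = 0 then m * σγ2 else 0) + (if s.2.1 = 0 ∧ s.2.2 = 0 then h * m * σα2 else 0)
    + (if s.1 = 0 ∧ s.2.2 = 0 then g * m * σβ2 else 0)

variable {σe2 σα2 σβ2 σγ2} in
theorem strataEigenvalue_pos (hσe : 0 < σe2) (hα : 0 ≤ σα2) (hβ : 0 ≤ σβ2) (hγ : 0 ≤ σγ2)
    (s : Fin 2 × Fin 2 × Fin 2) : 0 < strataEigenvalue g h m σe2 σα2 σβ2 σγ2 s := by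
  unfold strataEigenvalue
  split_ifs <;> positivity

theorem eq_sum_strataEigenvalue_smul_strataProj :
    σe2 • ((1 : Matrix (Fin g) (Fin g) ℝ) ⊗ₖ ((1 : Matrix (Fin h) (Fin h) ℝ) ⊗ₖ
        (1 : Matrix (Fin m) (Fin m) ℝ)))
      + σα2 • ((1 : Matrix (Fin g) (Fin g) ℝ) ⊗ₖ (Jmat h ⊗ₖ Jmat m))
      + σβ2 • (Jmat g ⊗ₖ ((1 : Matrix (Fin h) (Fin h) ℝ) ⊗ₖ Jmat m))
      + σγ2 • ((1 : Matrix (Fin g) (Fin g) ℝ) ⊗ₖ ((1 : Matrix (Fin h) (Fin h) ℝ) ⊗ₖ Jmat m)) =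
      ∑ s, strataEigenvalue g h m σe2 σα2 σβ2 σγ2 s • strataProj g h m s := by
  simp only [← sum_averagingProj, Jmat_eq_smul_Jbar, ← averagingProj_zero]
  simp only [Fintype.sum_prod_type, Fin.sum_univ_two, strataProj, strataEigenvalue,
    add_kronecker, kronecker_add, smul_kronecker, kronecker_smul, Fin.isValue, one_ne_zero,
    ↓reduceIte, and_false, and_true, add_zero]
  module

theorem eq_sum_inv_strataEigenvalue_smul_strataProj :
    (1 / σe2) • ((1 : Matrix (Fin g) (Fin g) ℝ) ⊗ₖ ((1 : Matrix (Fin h) (Fin h) ℝ) ⊗ₖ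
        ((1 : Matrix (Fin m) (Fin m) ℝ) - Jbar m)))
      + (1 / (σe2 + m * σγ2)) • ((1 - Jbar g) ⊗ₖ ((1 - Jbar h) ⊗ₖ Jbar m))
      + (1 / (σe2 + m * σγ2 + h * m * σα2)) • ((1 - Jbar g) ⊗ₖ (Jbar h ⊗ₖ Jbar m))
      + (1 / (σe2 + m * σγ2 + g * m * σβ2)) • (Jbar g ⊗ₖ ((1 - Jbar h) ⊗ₖ Jbar m))
      + (1 / (σe2 + m * σγ2 + h * m * σα2 + g * m * σβ2)) • (Jbar g ⊗ₖ (Jbar h ⊗ₖ Jbar m)) =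
      ∑ s, (strataEigenvalue g h m σe2 σα2 σβ2 σγ2 s)⁻¹ • strataProj g h m s := by
  -- `1 - J̄` has to be folded before `J̄` and `1` are.
  simp only [← averagingProj_one]
  simp only [← sum_averagingProj, ← averagingProj_zero]
  simp only [Fintype.sum_prod_type, Fin.sum_univ_two, strataProj, strataEigenvalue,
    add_kronecker, kronecker_add, Fin.isValue, one_ne_zero,
    ↓reduceIte, and_false, and_true, add_zero]
  module

end Strata

theorem stmt_12_general (g h m : ℕ)
    (σe2 σα2 σβ2 σγ2 : ℝ) (hσe : 0 < σe2) (hα : 0 ≤ σα2) (hβ : 0 ≤ σβ2) (hγ : 0 ≤ σγ2) :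
    let Ig : Matrix (Fin g) (Fin g) ℝ := 1
    let Ih : Matrix (Fin h) (Fin h) ℝ := 1
    let Im : Matrix (Fin m) (Fin m) ℝ := 1
    let V : Matrix (Fin g × Fin h × Fin m) (Fin g × Fin h × Fin m) ℝ :=
      σe2 • (Ig ⊗ₖ (Ih ⊗ₖ Im)) + σα2 • (Ig ⊗ₖ (Jmat h ⊗ₖ Jmat m))
        + σβ2 • (Jmat g ⊗ₖ (Ih ⊗ₖ Jmat m)) + σγ2 • (Ig ⊗ₖ (Ih ⊗ₖ Jmat m))
    let lam0 : ℝ := σe2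
    let lam7 : ℝ := σe2 + m * σγ2
    let lam3 : ℝ := σe2 + m * σγ2 + h * m * σα2
    let lam5 : ℝ := σe2 + m * σγ2 + g * m * σβ2
    let lam1 : ℝ := σe2 + m * σγ2 + h * m * σα2 + g * m * σβ2
    let W : Matrix (Fin g × Fin h × Fin m) (Fin g × Fin h × Fin m) ℝ :=
      (1 / lam0) • (Ig ⊗ₖ (Ih ⊗ₖ (Im - Jbar m)))
        + (1 / lam7) • ((Ig - Jbar g) ⊗ₖ ((Ih - Jbar h) ⊗ₖ Jbar m))
        + (1 / lam3) • ((Ig - Jbar g) ⊗ₖ (Jbar h ⊗ₖ Jbar m))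
        + (1 / lam5) • (Jbar g ⊗ₖ ((Ih - Jbar h) ⊗ₖ Jbar m))
        + (1 / lam1) • (Jbar g ⊗ₖ (Jbar h ⊗ₖ Jbar m))
    V * W = 1 ∧ W * V = 1 := by
  intro _ _ _ V _ _ _ _ _ W
  have hE := completeOrthogonalIdempotents_strataProj g h m
  have hne s := (strataEigenvalue_pos g h m hσe hα hβ hγ s).ne'
  rw [show V = _ from eq_sum_strataEigenvalue_smul_strataProj g h m σe2 σα2 σβ2 σγ2,
    show W = _ from eq_sum_inv_strataEigenvalue_smul_strataProj g h m σe2 σα2 σβ2 σγ2]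
  exact ⟨hE.sum_smul_mul_sum_smul_eq_one fun s => mul_inv_cancel₀ (hne s),
    hE.sum_smul_mul_sum_smul_eq_one fun s => inv_mul_cancel₀ (hne s)⟩

theorem stmt_12 (g h m : ℕ) (hg : 0 < g) (hh : 0 < h) (hm : 0 < m)
    (σe2 σα2 σβ2 σγ2 : ℝ) (hσe : 0 < σe2) (hα : 0 ≤ σα2) (hβ : 0 ≤ σβ2) (hγ : 0 ≤ σγ2) :
    let Ig : Matrix (Fin g) (Fin g) ℝ := 1
    let Ih : Matrix (Fin h) (Fin h) ℝ := 1
    let Im : Matrix (Fin m) (Fin m) ℝ := 1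
    let V : Matrix (Fin g × Fin h × Fin m) (Fin g × Fin h × Fin m) ℝ :=
      σe2 • (Ig ⊗ₖ (Ih ⊗ₖ Im)) + σα2 • (Ig ⊗ₖ (Jmat h ⊗ₖ Jmat m))
        + σβ2 • (Jmat g ⊗ₖ (Ih ⊗ₖ Jmat m)) + σγ2 • (Ig ⊗ₖ (Ih ⊗ₖ Jmat m))
    let lam0 : ℝ := σe2
    let lam7 : ℝ := σe2 + m * σγ2
    let lam3 : ℝ := σe2 + m * σγ2 + h * m * σα2
    let lam5 : ℝ := σe2 + m * σγ2 + g * m * σβ2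
    let lam1 : ℝ := σe2 + m * σγ2 + h * m * σα2 + g * m * σβ2
    let W : Matrix (Fin g × Fin h × Fin m) (Fin g × Fin h × Fin m) ℝ :=
      (1 / lam0) • (Ig ⊗ₖ (Ih ⊗ₖ (Im - Jbar m)))
        + (1 / lam7) • ((Ig - Jbar g) ⊗ₖ ((Ih - Jbar h) ⊗ₖ Jbar m))
        + (1 / lam3) • ((Ig - Jbar g) ⊗ₖ (Jbar h ⊗ₖ Jbar m))
        + (1 / lam5) • (Jbar g ⊗ₖ ((Ih - Jbar h) ⊗ₖ Jbar m))
        + (1 / lam1) • (Jbar g ⊗ₖ (Jbar h ⊗ₖ Jbar m))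
    V * W = 1 ∧ W * V = 1 :=
  stmt_12_general g h m σe2 σα2 σβ2 σγ2 hσe hα hβ hγ
end

section
/- For positive integers g, h, m with σ_e² > 0 and σ_α², σ_β², σ_γ² ≥ 0, the eigenvalues of the matrix V = σ_e²·I_{ghm} + σ_α²·(I_g⊗J_h⊗J_m) + σ_β²·(J_g⊗I_h⊗J_m) + σ_γ²·(I_g⊗I_h⊗J_m) are exactly σ_e² (with multiplicity gh(m−1)), σ_e² + mσ_γ² (with multiplicity (g−1)(h−1)), σ_e² + mσ_γ² + hmσ_α² (with multiplicity g−1), σ_e² + mσ_γ² + gmσ_β² (with multiplicity h−1), and σ_e² + mσ_γ² + hmσ_α² + gmσ_β² (with multiplicity 1). -/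
/-!
The all-ones matrix `J_a` is triangularized by the unit lower-triangular matrix `P_a` whose first
column is the eigenvector `(1, …, 1)` and whose other columns are standard basis vectors:
`P_a⁻¹ J_a P_a` has first row `(a, 1, …, 1)` and vanishes elsewhere. Conjugating `V` by
`P_g ⊗ P_h ⊗ P_m` therefore gives a matrix that is upper triangular for the lexicographic order on
triples, with diagonal entry `σe² + [k = 0] m (σγ² + [j = 0] h σα² + [i = 0] g σβ²)` at `(i, j, k)`.
Counting how often each value occurs gives the characteristic polynomial.
-/

open Matrix Kronecker Polynomial

theorem SemiconjBy.kronecker {ι κ R : Type*} [CommSemiring R] [Fintype ι] [Fintype κ]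
    {A A' P : Matrix ι ι R} {B B' Q : Matrix κ κ R} (hA : SemiconjBy P A' A)
    (hB : SemiconjBy Q B' B) : SemiconjBy (P ⊗ₖ Q) (A' ⊗ₖ B') (A ⊗ₖ B) := by
  rw [SemiconjBy, ← mul_kronecker_mul, ← mul_kronecker_mul, hA.eq, hB.eq]

namespace Matrix

variable {ι κ R α β : Type*}

theorem BlockTriangular.kronecker [MulZeroClass R] [LT α] [LT β] {A : Matrix ι ι R}
    {B : Matrix κ κ R} {bA : ι → α} {bB : κ → β} (hA : A.BlockTriangular bA)
    (hB : B.BlockTriangular bB) :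
    (A ⊗ₖ B).BlockTriangular fun p => toLex (bA p.1, bB p.2) := by
  rintro ⟨i, k⟩ ⟨i', k'⟩ hlt
  rcases Prod.Lex.toLex_lt_toLex.mp hlt with hi | ⟨-, hk⟩
  · simp [hA hi]
  · simp [hB hk]

theorem BlockTriangular.smul [MulZeroClass R] [LT α] {M : Matrix ι ι R} {b : ι → α}
    (hM : M.BlockTriangular b) (c : R) : (c • M).BlockTriangular b :=
  fun _ _ h => by simp [hM h]

variable [Fintype ι] [DecidableEq ι] [CommRing R]

theorem charpoly_eq_prod_of_blockTriangular [LinearOrder α] {M : Matrix ι ι R} (e : ι ≃ α)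
    (hM : M.BlockTriangular e) : M.charpoly = ∏ i, (X - C (M i i)) := by
  have := Fintype.ofEquiv ι e
  rw [← charpoly_reindex e, charpoly_of_isUpperTriangular _
    (blockTriangular_reindex_iff.mpr hM), ← e.prod_comp]
  simp

theorem charpoly_eq_of_semiconjBy {A B P : Matrix ι ι R} (hP : IsUnit P)
    (h : SemiconjBy P B A) : A.charpoly = B.charpoly := by
  obtain ⟨U, rfl⟩ := hP
  have hB : B = (↑U⁻¹ : Matrix ι ι R) * A * U := by
    rw [mul_assoc, ← h.eq, ← mul_assoc, U.inv_mul, one_mul]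
  rw [hB, charpoly_mul_comm, ← mul_assoc, U.mul_inv, one_mul]

end Matrix

namespace Jmat

def triangularizer (a : ℕ) : Matrix (Fin a) (Fin a) ℝ :=
  of fun i k => if k.val = 0 then 1 else (1 : Matrix (Fin a) (Fin a) ℝ) i k

def triangularForm (a : ℕ) : Matrix (Fin a) (Fin a) ℝ :=
  of fun i k => if i.val = 0 then (if k.val = 0 then (a : ℝ) else 1) else 0

theorem det_triangularizer (a : ℕ) : (triangularizer a).det = 1 := by
  rw [det_of_isLowerTriangular]
  · exact Finset.prod_eq_one fun i _ => by simp [triangularizer]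
  · intro i k (hik : i < k)
    have hk : k.val ≠ 0 := by omega
    simp [triangularizer, hk, one_apply_ne hik.ne]

theorem isUnit_triangularizer (a : ℕ) : IsUnit (triangularizer a) := by
  rw [isUnit_iff_isUnit_det, det_triangularizer]
  exact isUnit_one

theorem semiconjBy_triangularizer (a : ℕ) :
    SemiconjBy (triangularizer a) (triangularForm a) (Jmat a) := by
  obtain _ | a := a
  · exact Subsingleton.elim _ _
  rw [SemiconjBy]
  ext i k
  simp [mul_apply, Jmat, triangularizer, triangularForm, one_apply]

theorem triangularForm_isUpperTriangular (a : ℕ) : (triangularForm a).IsUpperTriangular := by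
  intro i k (hki : k < i)
  have hi : i.val ≠ 0 := by omega
  simp [triangularForm, hi]

theorem triangularForm_apply_self (a : ℕ) (i : Fin a) :
    triangularForm a i i = if i.val = 0 then (a : ℝ) else 0 := by
  split_ifs with hi <;> simp [triangularForm, hi]

end Jmat

section TwoWayCrossed

open Jmat

variable (g h m : ℕ) (σe2 σα2 σβ2 σγ2 : ℝ)

def twoWayCov : Matrix (Fin g × Fin h × Fin m) (Fin g × Fin h × Fin m) ℝ :=
  σe2 • 1 + σα2 • ((1 : Matrix (Fin g) (Fin g) ℝ) ⊗ₖ (Jmat h ⊗ₖ Jmat m))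
    + σβ2 • (Jmat g ⊗ₖ ((1 : Matrix (Fin h) (Fin h) ℝ) ⊗ₖ Jmat m))
    + σγ2 • ((1 : Matrix (Fin g) (Fin g) ℝ) ⊗ₖ ((1 : Matrix (Fin h) (Fin h) ℝ) ⊗ₖ Jmat m))

def twoWayCovTriangular : Matrix (Fin g × Fin h × Fin m) (Fin g × Fin h × Fin m) ℝ :=
  σe2 • 1 + σα2 • ((1 : Matrix (Fin g) (Fin g) ℝ) ⊗ₖ (triangularForm h ⊗ₖ triangularForm m))
    + σβ2 • (triangularForm g ⊗ₖ ((1 : Matrix (Fin h) (Fin h) ℝ) ⊗ₖ triangularForm m))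
    + σγ2 • ((1 : Matrix (Fin g) (Fin g) ℝ) ⊗ₖ ((1 : Matrix (Fin h) (Fin h) ℝ) ⊗ₖ triangularForm m))

theorem semiconjBy_twoWayCovTriangular :
    SemiconjBy (triangularizer g ⊗ₖ (triangularizer h ⊗ₖ triangularizer m))
      (twoWayCovTriangular g h m σe2 σα2 σβ2 σγ2) (twoWayCov g h m σe2 σα2 σβ2 σγ2) := by
  have hJ := semiconjBy_triangularizer
  have h1 := fun a => SemiconjBy.one_right (triangularizer a)
  exact ((((SemiconjBy.one_right _).smul_right σe2).add_right
    (((h1 g).kronecker ((hJ h).kronecker (hJ m))).smul_right σα2)).add_right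
    (((hJ g).kronecker ((h1 h).kronecker (hJ m))).smul_right σβ2)).add_right
    (((h1 g).kronecker ((h1 h).kronecker (hJ m))).smul_right σγ2)

theorem twoWayCovTriangular_blockTriangular :
    (twoWayCovTriangular g h m σe2 σα2 σβ2 σγ2).BlockTriangular
      ((Equiv.prodCongr (Equiv.refl _) toLex).trans toLex) := by
  have hU := triangularForm_isUpperTriangular
  have h1 : ∀ a, (1 : Matrix (Fin a) (Fin a) ℝ).IsUpperTriangular := fun _ => blockTriangular_one
  exact (((blockTriangular_one.smul σe2).add
    (((h1 g).kronecker ((hU h).kronecker (hU m))).smul σα2)).add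
    (((hU g).kronecker ((h1 h).kronecker (hU m))).smul σβ2)).add
    (((h1 g).kronecker ((h1 h).kronecker (hU m))).smul σγ2)

theorem prod_X_sub_C_twoWayCovTriangular_diag (hg : 0 < g) (hh : 0 < h) (hm : 0 < m) :
    ∏ p, (X - C (twoWayCovTriangular g h m σe2 σα2 σβ2 σγ2 p p)) =
      (X - C σe2) ^ (g * h * (m - 1))
        * (X - C (σe2 + m * σγ2)) ^ ((g - 1) * (h - 1))
        * (X - C (σe2 + m * σγ2 + h * m * σα2)) ^ (g - 1)
        * (X - C (σe2 + m * σγ2 + g * m * σβ2)) ^ (h - 1)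
        * (X - C (σe2 + m * σγ2 + h * m * σα2 + g * m * σβ2)) := by
  obtain ⟨g, rfl⟩ : ∃ n, g = n + 1 := ⟨g - 1, by omega⟩
  obtain ⟨h, rfl⟩ : ∃ n, h = n + 1 := ⟨h - 1, by omega⟩
  obtain ⟨m, rfl⟩ : ∃ n, m = n + 1 := ⟨m - 1, by omega⟩
  simp only [twoWayCovTriangular, Matrix.add_apply, Matrix.smul_apply, one_apply_eq, smul_eq_mul,
    kroneckerMap_apply, triangularForm_apply_self, Fin.val_eq_zero_iff, Fintype.prod_prod_type,
    Fin.prod_univ_succ, Fin.succ_ne_zero, ↓reduceIte, Finset.prod_const, Finset.card_univ,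
    Fintype.card_fin, add_tsub_cancel_right, mul_pow, ← pow_mul, map_add, map_mul, map_natCast,
    map_one, map_zero]
  push_cast
  ring

end TwoWayCrossed

theorem stmt_14_general (g h m : ℕ) (hg : 0 < g) (hh : 0 < h) (hm : 0 < m)
    (σe2 σα2 σβ2 σγ2 : ℝ) :
    let Ig : Matrix (Fin g) (Fin g) ℝ := 1
    let Ih : Matrix (Fin h) (Fin h) ℝ := 1
    let Im : Matrix (Fin m) (Fin m) ℝ := 1
    let V : Matrix (Fin g × Fin h × Fin m) (Fin g × Fin h × Fin m) ℝ :=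
      σe2 • (1 : Matrix (Fin g × Fin h × Fin m) (Fin g × Fin h × Fin m) ℝ)
        + σα2 • (Ig ⊗ₖ (Jmat h ⊗ₖ Jmat m))
        + σβ2 • (Jmat g ⊗ₖ (Ih ⊗ₖ Jmat m)) + σγ2 • (Ig ⊗ₖ (Ih ⊗ₖ Jmat m))
    V.charpoly =
      (X - C σe2) ^ (g * h * (m - 1))
        * (X - C (σe2 + m * σγ2)) ^ ((g - 1) * (h - 1))
        * (X - C (σe2 + m * σγ2 + h * m * σα2)) ^ (g - 1)
        * (X - C (σe2 + m * σγ2 + g * m * σβ2)) ^ (h - 1)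
        * (X - C (σe2 + m * σγ2 + h * m * σα2 + g * m * σβ2)) := by
  show (twoWayCov g h m σe2 σα2 σβ2 σγ2).charpoly = _
  have hP := (Jmat.isUnit_triangularizer g).kronecker
    ((Jmat.isUnit_triangularizer h).kronecker (Jmat.isUnit_triangularizer m))
  rw [charpoly_eq_of_semiconjBy hP (semiconjBy_twoWayCovTriangular g h m σe2 σα2 σβ2 σγ2),
    charpoly_eq_prod_of_blockTriangular _ (twoWayCovTriangular_blockTriangular ..)]
  exact prod_X_sub_C_twoWayCovTriangular_diag g h m σe2 σα2 σβ2 σγ2 hg hh hm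

theorem stmt_14 (g h m : ℕ) (hg : 0 < g) (hh : 0 < h) (hm : 0 < m)
    (σe2 σα2 σβ2 σγ2 : ℝ) (hσe : 0 < σe2) (hα : 0 ≤ σα2) (hβ : 0 ≤ σβ2) (hγ : 0 ≤ σγ2) :
    let Ig : Matrix (Fin g) (Fin g) ℝ := 1
    let Ih : Matrix (Fin h) (Fin h) ℝ := 1
    let Im : Matrix (Fin m) (Fin m) ℝ := 1
    let V : Matrix (Fin g × Fin h × Fin m) (Fin g × Fin h × Fin m) ℝ :=
      σe2 • (1 : Matrix (Fin g × Fin h × Fin m) (Fin g × Fin h × Fin m) ℝ)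
        + σα2 • (Ig ⊗ₖ (Jmat h ⊗ₖ Jmat m))
        + σβ2 • (Jmat g ⊗ₖ (Ih ⊗ₖ Jmat m)) + σγ2 • (Ig ⊗ₖ (Ih ⊗ₖ Jmat m))
    V.charpoly =
      (X - C σe2) ^ (g * h * (m - 1))
        * (X - C (σe2 + m * σγ2)) ^ ((g - 1) * (h - 1))
        * (X - C (σe2 + m * σγ2 + h * m * σα2)) ^ (g - 1)
        * (X - C (σe2 + m * σγ2 + g * m * σβ2)) ^ (h - 1)
        * (X - C (σe2 + m * σγ2 + h * m * σα2 + g * m * σβ2)) :=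
  stmt_14_general g h m hg hh hm σe2 σα2 σβ2 σγ2
end
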